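/- arXiv:2012.13433 — 5 statements merged into one kernel-verified Lean document; each statement's English description precedes it below -/
import Mathlib

section
/- For a subset Γ of the dual group of a finite abelian group G and ε ∈ (0, 1), the Bohr set Bohr(Γ, ε) = {x ∈ G : |χ(x) − 1| ≤ ε for all χ ∈ Γ} has cardinality at least (ε/(2π))^{|Γ|} · |G|. -/
/-!
Let `n = |G|` and `d = |Γ|`. Every value `χ x` is an `n`-th root of unity, so it is
`exp (2πi a / n)` for a phase `a ∈ ZMod n`; this attaches to each `x` a phase vector in
`(ZMod n)^Γ`. Let `K = ⌊εn/2π⌋ + 1` and `B = {0, …, K-1}^Γ`. The `n^d` translates of `B` cover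
every phase vector exactly `K^d` times, so some translate contains the phase vectors of a set
`A` of at least `K^d n / n^d ≥ (ε/2π)^d n` elements. Two phases in a common translate of
`{0, …, K-1}` differ by at most `K - 1`, so chord ≤ arc gives `‖χ x - χ y‖ ≤ 2π(K-1)/n ≤ ε` for
`x, y ∈ A`, and hence `A - x₀` lies in the Bohr set for any `x₀ ∈ A`.
-/

open Finset Real

lemma AddChar.norm_apply_sub_apply {A : Type*} [AddCommGroup A] [Finite A] (ψ : AddChar A ℂ)
    (a b : A) : ‖ψ a - ψ b‖ = ‖ψ (a - b) - 1‖ := by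
  rw [← one_mul ‖ψ (a - b) - 1‖, ← ψ.norm_apply b, ← norm_mul, mul_sub, mul_one, ← map_add_eq_mul,
    add_sub_cancel]

namespace ZMod

def arc (N K : ℕ) : Finset (ZMod N) := (range K).image Nat.cast

lemma card_arc {N K : ℕ} (hK : K ≤ N) : #(arc N K) = K := by
  rw [arc, card_image_of_injOn, card_range]
  intro u hu v hv huv
  simp only [coe_range, Set.mem_Iio] at hu hv
  simpa [natCast_eq_natCast_iff', Nat.mod_eq_of_lt (hu.trans_le hK),
    Nat.mod_eq_of_lt (hv.trans_le hK)] using huv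

variable {N : ℕ} [NeZero N]

lemma exists_stdAddChar_eq_of_pow_eq_one {z : ℂ} (hz : z ^ N = 1) :
    ∃ a : ZMod N, stdAddChar a = z := by
  have hζ : IsPrimitiveRoot (stdAddChar (1 : ZMod N)) N := by
    have h1 : stdAddChar (1 : ZMod N) = Complex.exp (2 * π * Complex.I / N) := by
      simpa using stdAddChar_coe (N := N) 1
    exact h1 ▸ Complex.isPrimitiveRoot_exp N (NeZero.ne N)
  obtain ⟨i, -, hi⟩ := hζ.eq_pow_of_pow_eq_one hz
  exact ⟨i, by rw [← hi, ← AddChar.map_nsmul_eq_pow, nsmul_one]⟩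

lemma norm_stdAddChar_intCast_sub_one_le (j : ℤ) :
    ‖stdAddChar (j : ZMod N) - 1‖ ≤ 2 * π * |j| / N := by
  have h := Real.norm_exp_I_mul_ofReal_sub_one_le (x := 2 * π * j / N)
  rw [stdAddChar_coe]
  convert h using 3
  · push_cast; ring_nf
  · rw [Real.norm_eq_abs, abs_div, abs_mul, abs_of_pos two_pi_pos, Nat.abs_cast]; norm_cast

lemma norm_stdAddChar_sub_le {K : ℕ} {a b s : ZMod N}
    (ha : a - s ∈ arc N K) (hb : b - s ∈ arc N K) :
    ‖stdAddChar a - stdAddChar b‖ ≤ 2 * π * (K - 1) / N := by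
  obtain ⟨u, hu, hua⟩ := mem_image.1 ha
  obtain ⟨v, hv, hvb⟩ := mem_image.1 hb
  have hab : a - b = ((u - v : ℤ) : ZMod N) := by push_cast; rw [hua, hvb]; abel
  rw [AddChar.norm_apply_sub_apply, hab]
  refine (norm_stdAddChar_intCast_sub_one_le _).trans ?_
  gcongr
  rw [mem_range] at hu hv
  exact_mod_cast (show |(u : ℤ) - v| ≤ (K : ℤ) - 1 by rw [abs_le]; omega)

end ZMod

lemma exists_card_mul_le_card_mul_card_filter_sub_mem {α β : Type*} [Fintype α] [AddCommGroup β]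
    [Fintype β] [DecidableEq β] (f : α → β) (B : Finset β) :
    ∃ s : β, #B * Fintype.card α ≤ Fintype.card β * #{x | f x - s ∈ B} := by
  have hfiber (x : α) : #{s | f x - s ∈ B} = #B :=
    card_nbij' (f x - ·) (f x - ·) (by intro; simp) (by intro; simp) (by intro; simp)
      (by intro; simp)
  have hsum : ∑ s : β, #{x | f x - s ∈ B} = Fintype.card α * #B := by
    simp only [card_filter]
    rw [sum_comm]
    simp only [← card_filter, hfiber, sum_const, card_univ, smul_eq_mul]
  obtain ⟨s, -, hs⟩ := exists_le_of_sum_le (s := univ) (f := fun _ => #B * Fintype.card α)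
    (g := fun s => Fintype.card β * #{x | f x - s ∈ B}) univ_nonempty
    (le_of_eq (by simp only [sum_const, card_univ, smul_eq_mul, ← mul_sum, hsum]; ring))
  exact ⟨s, hs⟩

section Bohr

variable {G : Type*} [AddCommGroup G]

def bohrSet (Γ : Finset (AddChar G ℂ)) (ε : ℝ) : Set G := {x | ∀ χ ∈ Γ, ‖χ x - 1‖ ≤ ε}

lemma card_le_card_bohrSet [Finite G] {Γ : Finset (AddChar G ℂ)} {ε : ℝ} {A : Finset G}
    (hA : ∀ x ∈ A, ∀ y ∈ A, ∀ χ ∈ Γ, ‖χ x - χ y‖ ≤ ε) : #A ≤ Nat.card (bohrSet Γ ε) := by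
  classical
  obtain rfl | ⟨x₀, hx₀⟩ := A.eq_empty_or_nonempty
  · simp
  rw [← card_image_of_injective A (sub_left_injective (b := x₀)), ← Nat.card_eq_finsetCard]
  refine Nat.card_mono (Set.toFinite _) ?_
  intro y hy χ hχ
  obtain ⟨x, hx, rfl⟩ := mem_image.1 hy
  rw [← χ.norm_apply_sub_apply]
  exact hA x hx x₀ hx₀ χ hχ

lemma AddChar.exists_stdAddChar_eq [Fintype G] (χ : AddChar G ℂ) (x : G) :
    ∃ a : ZMod (Fintype.card G), ZMod.stdAddChar a = χ x :=
  ZMod.exists_stdAddChar_eq_of_pow_eq_one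
    (by rw [← AddChar.map_nsmul_eq_pow, card_nsmul_eq_zero, AddChar.map_zero_eq_one])

lemma pow_mul_card_le_card_pow_mul_card_bohrSet [Fintype G] (Γ : Finset (AddChar G ℂ)) {ε : ℝ}
    {K : ℕ} (hKn : K ≤ Fintype.card G) (hKε : 2 * π * (K - 1) / Fintype.card G ≤ ε) :
    K ^ #Γ * Fintype.card G ≤ Fintype.card G ^ #Γ * Nat.card (bohrSet Γ ε) := by
  classical
  choose φ hφ using fun (x : G) (χ : Γ) => χ.1.exists_stdAddChar_eq x
  set B := Fintype.piFinset fun _ : Γ => ZMod.arc (Fintype.card G) K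
  obtain ⟨s, hs⟩ := exists_card_mul_le_card_mul_card_filter_sub_mem φ B
  rw [Fintype.card_piFinset, prod_const, ZMod.card_arc hKn, Fintype.card_fun, ZMod.card,
    card_univ, Fintype.card_coe] at hs
  refine hs.trans (Nat.mul_le_mul_left _ (card_le_card_bohrSet fun x hx y hy χ hχ => ?_))
  rw [← hφ x ⟨χ, hχ⟩, ← hφ y ⟨χ, hχ⟩]
  exact (ZMod.norm_stdAddChar_sub_le (Fintype.mem_piFinset.1 (mem_filter.1 hx).2 ⟨χ, hχ⟩)
    (Fintype.mem_piFinset.1 (mem_filter.1 hy).2 ⟨χ, hχ⟩)).trans hKε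

end Bohr

theorem stmt4 {G : Type*} [AddCommGroup G] [Fintype G]
    (Γ : Finset (AddChar G ℂ)) (ε : ℝ) (hε : ε ∈ Set.Ioo (0 : ℝ) 1) :
    (ε / (2 * Real.pi)) ^ Γ.card * (Fintype.card G : ℝ) ≤
      Nat.card {x : G | ∀ χ ∈ Γ, ‖χ x - 1‖ ≤ ε} := by
  obtain ⟨hε0, hε1⟩ := hε
  set n := Fintype.card G
  have hn : (0 : ℝ) < n := by exact_mod_cast Fintype.card_pos
  set δ := ε / (2 * π)
  have hδ1 : δ < 1 := by rw [div_lt_one two_pi_pos]; linarith [pi_gt_three]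
  set K := ⌊δ * n⌋₊ + 1
  have hK_gt : δ * n < K := by push_cast [K]; exact Nat.lt_floor_add_one _
  have hKn : K ≤ n := (Nat.floor_lt (by positivity)).2 (by nlinarith)
  have hKε : 2 * π * (K - 1) / n ≤ ε := by
    rw [div_le_iff₀ hn]
    calc 2 * π * (K - 1) = 2 * π * ⌊δ * n⌋₊ := by push_cast [K]; ring
      _ ≤ 2 * π * (δ * n) := by gcongr; exact Nat.floor_le (by positivity)
      _ = ε * n := by simp only [δ]; field_simp
  calc δ ^ #Γ * n ≤ (K / n) ^ #Γ * n := by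
        gcongr; rw [le_div_iff₀ hn]; exact hK_gt.le
    _ = K ^ #Γ * n / n ^ #Γ := by rw [div_pow, div_mul_eq_mul_div]
    _ ≤ _ := by
        rw [div_le_iff₀ (by positivity), mul_comm _ (n ^ #Γ : ℝ)]
        exact_mod_cast pow_mul_card_le_card_pow_mul_card_bohrSet Γ hKn hKε
end

section
/- Let X, Y, Z be nonempty subsets of F_p and δ ∈ (0, 1) such that no element of Z lies in X +_δ Y (i.e., every z ∈ Z has fewer than δp representations z = x + y with x ∈ X, y ∈ Y). Assume |X| ≥ εp for some ε ∈ (0, 1), and let T > 1. Then there exists X' ⊆ X with |X'| ≤ |X|/T such that no element of X \ X' lies in Z −_{δT/ε} Y. -/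
/-!
Take for `X'` the elements of `X` with at least `ηp` representations as `z - y`, `η = δT/ε`.
Each representation `x = z - y` is a representation `z = x + y`, so double counting gives
`|X'| ηp ≤ |Z| δp ≤ δp²`, i.e. `|X'| ≤ εp/T ≤ |X|/T`.
-/

open Finset

section DoubleCounting

variable {G : Type*} [AddCommGroup G] [DecidableEq G]

/-- Both sides count the triples `(x, y, z) ∈ A × Y × Z` with `x + y = z`. -/
lemma sum_card_filter_sub_eq_sum_card_filter_add (A Y Z : Finset G) :
    ∑ x ∈ A, ((Z ×ˢ Y).filter (fun q => q.1 - q.2 = x)).card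
      = ∑ z ∈ Z, ((A ×ˢ Y).filter (fun q => q.1 + q.2 = z)).card := by
  simp only [card_filter, sum_product, sub_eq_iff_eq_add, eq_comm (b := _ + _)]
  exact sum_comm

lemma card_mul_le_card_mul_of_le_card_filter_sub {A X Y Z : Finset G} (hAX : A ⊆ X) {η c : ℝ}
    (hA : ∀ x ∈ A, η ≤ ((Z ×ˢ Y).filter (fun q => q.1 - q.2 = x)).card)
    (hZ : ∀ z ∈ Z, (((X ×ˢ Y).filter (fun q => q.1 + q.2 = z)).card : ℝ) ≤ c) :
    A.card * η ≤ Z.card * c := by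
  calc (A.card : ℝ) * η
      ≤ ∑ x ∈ A, (((Z ×ˢ Y).filter (fun q => q.1 - q.2 = x)).card : ℝ) := by
        simpa only [nsmul_eq_mul] using card_nsmul_le_sum A _ η hA
    _ = ∑ z ∈ Z, (((A ×ˢ Y).filter (fun q => q.1 + q.2 = z)).card : ℝ) := by
        exact_mod_cast sum_card_filter_sub_eq_sum_card_filter_add A Y Z
    _ ≤ ∑ z ∈ Z, (((X ×ˢ Y).filter (fun q => q.1 + q.2 = z)).card : ℝ) := by
        gcongr
    _ ≤ Z.card * c := by
        simpa only [nsmul_eq_mul] using sum_le_card_nsmul Z _ c hZ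

end DoubleCounting

theorem stmt8_general (p : ℕ) [Fact p.Prime] (X Y Z : Finset (ZMod p))
    (δ ε T : ℝ) (hδ : δ ∈ Set.Ioo (0 : ℝ) 1) (hε : ε ∈ Set.Ioo (0 : ℝ) 1) (hT : 1 < T)
    (hXcard : ε * p ≤ X.card)
    (hZXY : ∀ z ∈ Z, (((X ×ˢ Y).filter (fun q => q.1 + q.2 = z)).card : ℝ) < δ * p) :
    ∃ X' ⊆ X, (X'.card : ℝ) ≤ (X.card : ℝ) / T ∧
      ∀ x ∈ X \ X', (((Z ×ˢ Y).filter (fun q => q.1 - q.2 = x)).card : ℝ) < (δ * T / ε) * p := by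
  have hp : 0 < (p : ℝ) := by exact_mod_cast (Fact.out : p.Prime).pos
  have hZp : (Z.card : ℝ) ≤ p := by exact_mod_cast (card_le_univ Z).trans_eq (ZMod.card p)
  set X' := X.filter
    fun x => (δ * T / ε) * p ≤ (((Z ×ˢ Y).filter (fun q => q.1 - q.2 = x)).card : ℝ)
  refine ⟨X', filter_subset _ _, ?_, fun x hx => ?_⟩
  · have hδp : 0 < δ * p := mul_pos hδ.1 hp
    have hcount : X'.card * ((δ * T / ε) * p) ≤ p * (δ * p) :=
      (card_mul_le_card_mul_of_le_card_filter_sub (filter_subset _ _)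
        (fun x hx => (mem_filter.mp hx).2) (fun z hz => (hZXY z hz).le)).trans
        (mul_le_mul_of_nonneg_right hZp hδp.le)
    have hX' : (X'.card * T) * (δ * p) ≤ (ε * p) * (δ * p) :=
      calc (X'.card * T) * (δ * p) = ε * (X'.card * ((δ * T / ε) * p)) := by
            field_simp [hε.1.ne']
        _ ≤ ε * (p * (δ * p)) := mul_le_mul_of_nonneg_left hcount hε.1.le
        _ = (ε * p) * (δ * p) := by ring
    rw [le_div_iff₀ (by linarith)]
    exact (le_of_mul_le_mul_right hX' hδp).trans hXcard
  · simp only [mem_sdiff, X', mem_filter, not_and, not_le] at hx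
    exact hx.2 hx.1

theorem stmt8 (p : ℕ) [Fact p.Prime] (X Y Z : Finset (ZMod p))
    (hX : X.Nonempty) (hY : Y.Nonempty) (hZ : Z.Nonempty)
    (δ ε T : ℝ) (hδ : δ ∈ Set.Ioo (0 : ℝ) 1) (hε : ε ∈ Set.Ioo (0 : ℝ) 1) (hT : 1 < T)
    (hXcard : ε * p ≤ X.card)
    (hZXY : ∀ z ∈ Z, (((X ×ˢ Y).filter (fun q => q.1 + q.2 = z)).card : ℝ) < δ * p) :
    ∃ X' ⊆ X, (X'.card : ℝ) ≤ (X.card : ℝ) / T ∧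
      ∀ x ∈ X \ X', (((Z ×ˢ Y).filter (fun q => q.1 - q.2 = x)).card : ℝ) < (δ * T / ε) * p :=
  stmt8_general p X Y Z δ ε T hδ hε hT hXcard hZXY
end

section
/- Let G be a finite abelian group, A ⊆ G nonempty, and ε ∈ (0, 1]. Then the additive dimension of the spectrum Spec_ε(A) = {χ : |Â(χ)| ≥ ε|A|} is at most 2ε^{-2} log₂(|G|/|A|). -/
/-!
Riesz products. For `χ ∈ Λ` put `d χ = (ε/2) · Â(χ)/|Â(χ)|`. The Riesz product
`F a = ∏_{χ ∈ Λ} (1 + Re (d χ · χ a))` is nonnegative, and has mean `1` because `Λ` is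
dissociated, so `∑_{a ∈ A} F a ≤ |G|`. On the other hand `log (1 + x)` lies above its chord on
`[-ε/2, ε/2]`, and `d χ` is aligned with `Â(χ)`, so `∑_{a ∈ A} Re (d χ · χ a) ≥ ε²|A|/2`; with
Jensen for `exp` this gives `∑_{a ∈ A} F a ≥ |A| · exp (|Λ| ε² log 2 / 2)`.
-/

open Finset Real
open scoped BigOperators ComplexConjugate

lemma two_mul_add_le_log_sub_log {u : ℝ} (hu0 : 0 ≤ u) (hu1 : u < 1) :
    2 * u + 2 * u ^ 3 / 3 ≤ log (1 + u) - log (1 - u) := by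
  have hsum := hasSum_log_sub_log_of_abs_lt_one (abs_lt.2 ⟨by linarith, hu1⟩)
  have := sum_le_hasSum (range 2) (fun k _ => by positivity) hsum
  norm_num [sum_range_succ] at this
  linarith

-- With `ε = 2u` the right side is `log (1 - u²) + 2u (log (1 + u) - log (1 - u)) ≥ 3u²`,
-- and `3/4 > log 2`.
lemma sq_mul_log_two_le {ε : ℝ} (hε0 : 0 < ε) (hε1 : ε ≤ 1) :
    ε ^ 2 * log 2 ≤ (1 + ε) * log (1 + ε / 2) + (1 - ε) * log (1 - ε / 2) := by
  obtain ⟨u, rfl⟩ : ∃ u, ε = 2 * u := ⟨ε / 2, by ring⟩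
  have hu : u ≤ 1 / 2 := by linarith
  have hodd := two_mul_add_le_log_sub_log (u := u) (by linarith) (by linarith)
  have hu2 : 0 < 1 - u ^ 2 := by nlinarith
  have heven : 1 - (1 - u ^ 2)⁻¹ ≤ log (1 + u) + log (1 - u) := by
    rw [← log_mul (by linarith) (by linarith)]
    exact (one_sub_inv_le_log_of_pos (by nlinarith)).trans_eq (by ring_nf)
  have hinv : (1 - u ^ 2)⁻¹ ≤ 1 + u ^ 2 + 4 / 3 * u ^ 4 := by
    rw [inv_le_iff_one_le_mul₀' hu2]
    nlinarith [mul_nonneg (pow_nonneg (sq_nonneg u) 2) (by nlinarith : (0 : ℝ) ≤ 1 - 4 * u ^ 2)]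
  have hlog2 := log_two_lt_d9
  norm_num only [mul_div_cancel_left₀]
  nlinarith [mul_le_mul_of_nonneg_left hodd (by positivity : (0 : ℝ) ≤ 2 * u), sq_nonneg u]

lemma chord_le_log_one_add {t x : ℝ} (ht0 : 0 < t) (ht1 : t < 1) (hx : |x| ≤ t) :
    ((1 - x / t) * log (1 - t) + (1 + x / t) * log (1 + t)) / 2 ≤ log (1 + x) := by
  obtain ⟨hxt1, hxt2⟩ := abs_le.1 <| show |x / t| ≤ 1 by
    rw [abs_div, abs_of_pos ht0, div_le_one ht0]; exact hx
  have := strictConcaveOn_log_Ioi.concaveOn.2 (show 1 - t ∈ Set.Ioi 0 by simp; linarith)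
    (show 1 + t ∈ Set.Ioi 0 by simp; linarith)
    (show 0 ≤ (1 - x / t) / 2 by linarith) (show 0 ≤ (1 + x / t) / 2 by linarith) (by ring)
  simp only [smul_eq_mul] at this
  refine le_of_eq_of_le (by ring) (this.trans_eq ?_)
  congr 1
  field_simp
  ring

lemma card_mul_exp_le_sum_exp {ι : Type*} (s : Finset ι) (f : ι → ℝ) {c : ℝ}
    (hc : s.card * c ≤ ∑ i ∈ s, f i) : s.card * exp c ≤ ∑ i ∈ s, exp (f i) :=
  calc s.card * exp c ≤ ∑ i ∈ s, exp c * (1 + (f i - c)) := by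
        rw [← mul_sum, sum_add_distrib, sum_sub_distrib]
        simp only [sum_const, nsmul_eq_mul, mul_one]
        nlinarith [exp_pos c]
    _ ≤ ∑ i ∈ s, exp (f i) := sum_le_sum fun i _ => by
        calc exp c * (1 + (f i - c)) ≤ exp c * exp (f i - c) := by
              gcongr; linarith [add_one_le_exp (f i - c)]
          _ = exp (f i) := by rw [← exp_add, add_sub_cancel]

lemma card_mul_le_sum_chord {ι : Type*} (A : Finset ι) (x : ι → ℝ) {t ε : ℝ} (ht0 : 0 < t)
    (ht1 : t < 1) (hx : t * ε * A.card ≤ ∑ a ∈ A, x a) :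
    A.card * (((1 - ε) * log (1 - t) + (1 + ε) * log (1 + t)) / 2) ≤
      ∑ a ∈ A, ((1 - x a / t) * log (1 - t) + (1 + x a / t) * log (1 + t)) / 2 := by
  have hlog : log (1 - t) ≤ log (1 + t) := log_le_log (by linarith) (by linarith)
  have hlin : ∀ y, ((1 - y / t) * log (1 - t) + (1 + y / t) * log (1 + t)) / 2 =
      (log (1 - t) + log (1 + t)) / 2 + y * ((log (1 + t) - log (1 - t)) / (2 * t)) := by
    intro y; field_simp; ring
  simp_rw [hlin, sum_add_distrib, ← sum_mul, sum_const, nsmul_eq_mul]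
  have := mul_le_mul_of_nonneg_right hx
    (by positivity : 0 ≤ (log (1 + t) - log (1 - t)) / (2 * t))
  have ht : t * ε * A.card * ((log (1 + t) - log (1 - t)) / (2 * t)) =
      ε * A.card * ((log (1 + t) - log (1 - t)) / 2) := by field_simp
  linarith

lemma card_mul_exp_le_sum_prod_one_add {ι κ : Type*} (A : Finset ι) (Λ : Finset κ)
    (x : ι → κ → ℝ) {t ε : ℝ} (ht0 : 0 < t) (ht1 : t < 1) (hx : ∀ a ∈ A, ∀ χ ∈ Λ, |x a χ| ≤ t)
    (hmean : ∀ χ ∈ Λ, t * ε * A.card ≤ ∑ a ∈ A, x a χ) :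
    A.card * exp (Λ.card * (((1 - ε) * log (1 - t) + (1 + ε) * log (1 + t)) / 2)) ≤
      ∑ a ∈ A, ∏ χ ∈ Λ, (1 + x a χ) := by
  set chord := fun y => ((1 - y / t) * log (1 - t) + (1 + y / t) * log (1 + t)) / 2
  have hprod : ∀ a ∈ A, exp (∑ χ ∈ Λ, chord (x a χ)) ≤ ∏ χ ∈ Λ, (1 + x a χ) := fun a ha => by
    rw [exp_sum]
    refine prod_le_prod (fun _ _ => (exp_pos _).le) fun χ hχ => ?_
    have hpos : 0 < 1 + x a χ := by linarith [(abs_le.1 (hx a ha χ hχ)).1]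
    exact (exp_le_exp.2 (chord_le_log_one_add ht0 ht1 (hx a ha χ hχ))).trans_eq (exp_log hpos)
  refine (card_mul_exp_le_sum_exp A _ ?_).trans (sum_le_sum hprod)
  calc (A.card : ℝ) * (Λ.card * (((1 - ε) * log (1 - t) + (1 + ε) * log (1 + t)) / 2))
      = ∑ _χ ∈ Λ, A.card * (((1 - ε) * log (1 - t) + (1 + ε) * log (1 + t)) / 2) := by
        rw [sum_const, nsmul_eq_mul]; ring
    _ ≤ ∑ χ ∈ Λ, ∑ a ∈ A, chord (x a χ) :=
        sum_le_sum fun χ hχ => card_mul_le_sum_chord A (x · χ) ht0 ht1 (hmean χ hχ)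
    _ = ∑ a ∈ A, ∑ χ ∈ Λ, chord (x a χ) := sum_comm

lemma Complex.norm_div_norm_le_one (z : ℂ) : ‖z / ‖z‖‖ ≤ 1 := by
  rw [norm_div, Complex.norm_real, norm_norm]
  exact div_self_le_one _

lemma Complex.div_norm_mul_conj (z : ℂ) : z / ‖z‖ * conj z = ‖z‖ := by
  rcases eq_or_ne z 0 with rfl | hz
  · simp
  rw [div_mul_eq_mul_div, Complex.mul_conj, Complex.normSq_eq_norm_sq]
  have : (‖z‖ : ℂ) ≠ 0 := by exact_mod_cast norm_ne_zero_iff.2 hz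
  push_cast
  field_simp

lemma AddChar.addDissociated_of_disjoint_prod_eq_prod {A M : Type*} [AddCommGroup A]
    [CommMonoid M] {Λ : Finset (AddChar A M)}
    (hΛ : ∀ P N : Finset (AddChar A M), P ⊆ Λ → N ⊆ Λ → Disjoint P N →
      (∏ χ ∈ P, χ) = (∏ χ ∈ N, χ) → P = ∅ ∧ N = ∅) :
    AddDissociated (Λ : Set (AddChar A M)) := by
  by_contra h
  obtain ⟨P, N, hP, hN, hPN, hne, hsum⟩ := not_addDissociated_iff_exists_disjoint.1 h
  obtain ⟨rfl, rfl⟩ := hΛ P N (coe_subset.1 hP) (coe_subset.1 hN) hPN hsum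
  exact hne rfl

namespace AddDissociated

variable {G : Type*} [AddCommGroup G] [Fintype G] {Λ : Finset (AddChar G ℂ)}

lemma expect_prod_one_add_re (hΛ : AddDissociated (Λ : Set (AddChar G ℂ)))
    (d : AddChar G ℂ → ℂ) : 𝔼 a, ∏ ψ ∈ Λ, (1 + (d ψ * ψ a).re) = 1 := by
  classical
  have hsupp : {ψ | (if ψ ∈ Λ then d ψ else 0) ≠ 0} ⊆ (Λ : Set (AddChar G ℂ)) := fun ψ hψ =>
    by_contra fun h => hψ (if_neg h)
  have := randomisation (fun _ => 1) _ (hΛ.subset hsupp)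
  simpa [ite_mul, apply_ite, prod_ite_mem] using this

lemma sum_prod_one_add_re_le_card (hΛ : AddDissociated (Λ : Set (AddChar G ℂ)))
    (d : AddChar G ℂ → ℂ) (hd : ∀ ψ ∈ Λ, ‖d ψ‖ ≤ 1) (A : Finset G) :
    ∑ a ∈ A, ∏ ψ ∈ Λ, (1 + (d ψ * ψ a).re) ≤ Fintype.card G := by
  have hnonneg : ∀ a, 0 ≤ ∏ ψ ∈ Λ, (1 + (d ψ * ψ a).re) := fun a =>
    prod_nonneg fun ψ hψ => by
      have h := (Complex.abs_re_le_norm (d ψ * ψ a)).trans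
        (show ‖d ψ * ψ a‖ ≤ 1 by rw [norm_mul, AddChar.norm_apply, mul_one]; exact hd ψ hψ)
      linarith [(abs_le.1 h).1]
  calc ∑ a ∈ A, ∏ ψ ∈ Λ, (1 + (d ψ * ψ a).re)
      ≤ ∑ a, ∏ ψ ∈ Λ, (1 + (d ψ * ψ a).re) :=
        sum_le_sum_of_subset_of_nonneg (subset_univ A) fun a _ _ => hnonneg a
    _ = Fintype.card G := by
        have h := hΛ.expect_prod_one_add_re d
        rwa [Fintype.expect_eq_sum_div_card, div_eq_one_iff_eq (by positivity)] at h

lemma card_mul_exp_le_card (hΛ : AddDissociated (Λ : Set (AddChar G ℂ))) (A : Finset G)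
    {t ε : ℝ} (ht0 : 0 < t) (ht1 : t < 1)
    (hspec : ∀ χ ∈ Λ, ε * A.card ≤ ‖∑ a ∈ A, conj (χ a)‖) :
    A.card * exp (Λ.card * (((1 - ε) * log (1 - t) + (1 + ε) * log (1 + t)) / 2)) ≤
      Fintype.card G := by
  set S : AddChar G ℂ → ℂ := fun χ => ∑ a ∈ A, conj (χ a)
  set d : AddChar G ℂ → ℂ := fun χ => t * (S χ / ‖S χ‖)
  have hd : ∀ χ, ‖d χ‖ ≤ t := fun χ => by
    simpa [d, abs_of_pos ht0] using
      mul_le_mul_of_nonneg_left (Complex.norm_div_norm_le_one (S χ)) ht0.le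
  have hx : ∀ a ∈ A, ∀ χ ∈ Λ, |(d χ * χ a).re| ≤ t := fun a _ χ _ =>
    (Complex.abs_re_le_norm _).trans (by rw [norm_mul, AddChar.norm_apply, mul_one]; exact hd χ)
  have hmean : ∀ χ ∈ Λ, t * ε * A.card ≤ ∑ a ∈ A, (d χ * χ a).re := fun χ hχ => by
    have hconj : conj (S χ) = ∑ a ∈ A, χ a := by simp [S, map_sum]
    have hsum : ∑ a ∈ A, d χ * χ a = (t * ‖S χ‖ : ℝ) := by
      rw [← mul_sum, ← hconj, mul_assoc, Complex.div_norm_mul_conj]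
      push_cast; rfl
    rw [← Complex.re_sum, hsum, Complex.ofReal_re, mul_assoc]
    exact mul_le_mul_of_nonneg_left (hspec χ hχ) ht0.le
  exact (card_mul_exp_le_sum_prod_one_add A Λ _ ht0 ht1 hx hmean).trans
    (hΛ.sum_prod_one_add_re_le_card d (fun χ _ => (hd χ).trans ht1.le) A)

end AddDissociated

/-- Chang's theorem: any dissociated subset `Λ` of the `ε`-spectrum of `A`
has size at most `2 ε⁻² log₂(|G|/|A|)`. -/
theorem stmt9 {G : Type*} [AddCommGroup G] [Fintype G]
    (A : Finset G) (hA : A.Nonempty) (ε : ℝ) (hε : ε ∈ Set.Ioc (0 : ℝ) 1)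
    (Λ : Finset (AddChar G ℂ))
    (hΛspec : ∀ χ ∈ Λ, ε * A.card ≤ ‖∑ a ∈ A, (starRingEnd ℂ) (χ a)‖)
    (hdiss : ∀ P N : Finset (AddChar G ℂ), P ⊆ Λ → N ⊆ Λ → Disjoint P N →
      (∏ χ ∈ P, χ) = (∏ χ ∈ N, χ) → P = ∅ ∧ N = ∅) :
    (Λ.card : ℝ) ≤ 2 * ε⁻¹ ^ 2 * Real.logb 2 ((Fintype.card G : ℝ) / A.card) := by
  obtain ⟨hε0, hε1⟩ := hε
  have hchang := (AddChar.addDissociated_of_disjoint_prod_eq_prod hdiss).card_mul_exp_le_card A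
    (t := ε / 2) (by positivity) (by linarith) hΛspec
  have hA0 : (0 : ℝ) < A.card := by exact_mod_cast hA.card_pos
  have hlog : Λ.card * (ε ^ 2 * log 2 / 2) ≤ log (Fintype.card G / A.card) := by
    rw [le_log_iff_exp_le (div_pos (hchang.trans_lt' (by positivity)) hA0), le_div_iff₀ hA0,
      mul_comm]
    refine le_trans ?_ hchang
    gcongr
    linarith [sq_mul_log_two_le hε0 hε1]
  rw [logb, show 2 * ε⁻¹ ^ 2 * (log (Fintype.card G / A.card) / log 2) =
    log (Fintype.card G / A.card) / (ε ^ 2 * log 2 / 2) by field_simp]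
  exact (le_div_iff₀ (by positivity)).2 hlog
end

section
/- Let G be a finite abelian group, A ⊆ G with |A| = α|G|, B ⊆ G with |B| = β|G|, and let Λ be a finite set of characters such that every χ ∈ Spec_ε(A) is of the form Σ_{λ∈Λ} ξ_λ λ with ξ_λ ∈ {0, 1, −1}. Let ζ > 0 and let B̃ = Bohr(Λ, ζ/|Λ|). Define g(x) = (1/|G|) Σ_{χ ∈ Spec_ε(A)} Â(χ)B̂(χ) χ(x). Then for every b ∈ B̃ and x ∈ G, |g(x + b) − g(x)| ≤ √(αβ) · ζ · |G|. -/
open Finset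
open scoped ComplexConjugate

/-!
Every character of the large spectrum is a signed combination `∏ P / ∏ N` of at most `|Λ|`
characters of `Λ`, each of which moves by at most `ζ / |Λ|` at a point `b` of the Bohr set, so by
the triangle inequality the character itself moves by at most `ζ`. The difference
`g (x + b) - g x` is then bounded termwise by `ζ / |G| · ∑ χ, |Â χ| |B̂ χ|`, and Cauchy–Schwarz
with Parseval (`∑ χ, |Â χ|² = |A| |G|`) bounds the sum by `√(αβ) |G|²`.
-/

lemma norm_prod_sub_one_le_sum_norm_sub_one {ι R : Type*} [NormedCommRing R]
    (s : Finset ι) (z : ι → R) (hz : ∀ i ∈ s, ‖z i‖ ≤ 1) :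
    ‖∏ i ∈ s, z i - 1‖ ≤ ∑ i ∈ s, ‖z i - 1‖ := by
  classical
  induction s using Finset.induction_on with
  | empty => simp
  | insert j s hj ih =>
    rw [prod_insert hj, sum_insert hj]
    have ih := ih fun i hi ↦ hz i (mem_insert_of_mem hi)
    calc ‖z j * ∏ i ∈ s, z i - 1‖ = ‖z j * (∏ i ∈ s, z i - 1) + (z j - 1)‖ := by ring_nf
      _ ≤ ‖z j‖ * ‖∏ i ∈ s, z i - 1‖ + ‖z j - 1‖ := (norm_add_le _ _).trans
          (add_le_add_left (norm_mul_le _ _) _)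
      _ ≤ ‖z j - 1‖ + ∑ i ∈ s, ‖z i - 1‖ := by
          nlinarith [hz j (mem_insert_self j s), norm_nonneg (∏ i ∈ s, z i - 1)]

namespace AddChar

section Bohr

variable {G R : Type*} [AddCommGroup G] [Finite G] [NormedCommRing R] [NormMulClass R]
  [NormOneClass R]

lemma norm_prod_apply_sub_one_le (s : Finset (AddChar G R)) (b : G) :
    ‖(∏ lam ∈ s, lam) b - 1‖ ≤ ∑ lam ∈ s, ‖lam b - 1‖ := by
  rw [prod_apply]
  exact norm_prod_sub_one_le_sum_norm_sub_one s _ fun lam _ ↦ (norm_apply lam b).le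

lemma norm_apply_sub_one_le_of_mul_prod_eq_prod {χ : AddChar G R} {P N : Finset (AddChar G R)}
    (h : χ * ∏ lam ∈ N, lam = ∏ lam ∈ P, lam) (b : G) :
    ‖χ b - 1‖ ≤ ∑ lam ∈ P, ‖lam b - 1‖ + ∑ lam ∈ N, ‖lam b - 1‖ := by
  set n := (∏ lam ∈ N, lam) b
  have hp : (∏ lam ∈ P, lam) b = χ b * n := by rw [← h, mul_apply]
  have hn : ‖n‖ = 1 := norm_apply _ b
  calc ‖χ b - 1‖ = ‖(χ b - 1) * n‖ := by rw [norm_mul, hn, mul_one]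
    _ = ‖((∏ lam ∈ P, lam) b - 1) - (n - 1)‖ := by rw [hp]; ring_nf
    _ ≤ ‖(∏ lam ∈ P, lam) b - 1‖ + ‖n - 1‖ := norm_sub_le _ _
    _ ≤ _ := add_le_add (norm_prod_apply_sub_one_le P b) (norm_prod_apply_sub_one_le N b)

lemma norm_apply_sub_one_le_of_mem_bohr {Λ : Finset (AddChar G R)} {ζ : ℝ} (hζ : 0 ≤ ζ) {b : G}
    (hb : ∀ lam ∈ Λ, ‖lam b - 1‖ ≤ ζ / #Λ) {χ : AddChar G R} {P N : Finset (AddChar G R)}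
    (hP : P ⊆ Λ) (hN : N ⊆ Λ) (hPN : Disjoint P N) (h : χ * ∏ lam ∈ N, lam = ∏ lam ∈ P, lam) :
    ‖χ b - 1‖ ≤ ζ := by
  calc ‖χ b - 1‖ ≤ ∑ lam ∈ P ∪ N, ‖lam b - 1‖ := by
        rw [sum_union hPN]; exact norm_apply_sub_one_le_of_mul_prod_eq_prod h b
    _ ≤ ∑ lam ∈ Λ, ‖lam b - 1‖ :=
        sum_le_sum_of_subset_of_nonneg (union_subset hP hN) fun _ _ _ ↦ norm_nonneg _
    _ ≤ #Λ * (ζ / #Λ) := by simpa using sum_le_card_nsmul Λ _ _ hb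
    _ ≤ ζ := by
        rcases Λ.eq_empty_or_nonempty with rfl | hΛ
        · simpa using hζ
        · rw [mul_div_cancel₀ _ (by positivity)]

lemma norm_sum_mul_apply_add_sub_le (s : Finset (AddChar G R)) (c : AddChar G R → R)
    {ζ : ℝ} {b : G} (hb : ∀ χ ∈ s, ‖χ b - 1‖ ≤ ζ) (x : G) :
    ‖∑ χ ∈ s, c χ * χ (x + b) - ∑ χ ∈ s, c χ * χ x‖ ≤ ζ * ∑ χ ∈ s, ‖c χ‖ := by
  rw [← sum_sub_distrib, mul_sum]
  refine (norm_sum_le _ _).trans (sum_le_sum fun χ hχ ↦ ?_)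
  rw [map_add_eq_mul, ← mul_sub, ← mul_sub_one, norm_mul, norm_mul, norm_apply, one_mul,
    mul_comm ζ]
  exact mul_le_mul_of_nonneg_left (hb χ hχ) (norm_nonneg _)

end Bohr

section Parseval

variable {G : Type*} [AddCommGroup G] [Fintype G] [Fintype (AddChar G ℂ)]

lemma sum_norm_sq_sum_conj_apply (A : Finset G) :
    ∑ χ : AddChar G ℂ, ‖∑ a ∈ A, conj (χ a)‖ ^ 2 = #A * Fintype.card G := by
  classical
  obtain rfl : ‹Fintype (AddChar G ℂ)› = instFintype G ℂ := Subsingleton.elim _ _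
  have orthogonality (a a' : G) :
      ∑ χ : AddChar G ℂ, conj (χ a) * χ a' = if a = a' then (Fintype.card G : ℂ) else 0 := by
    simp_rw [← map_neg_eq_conj, ← map_add_eq_mul, sum_apply_eq_ite, neg_add_eq_zero]
  apply Complex.ofReal_injective
  push_cast
  simp_rw [← Complex.mul_conj', map_sum, Complex.conj_conj, sum_mul_sum]
  rw [sum_comm]
  simp [sum_comm (γ := AddChar G ℂ), orthogonality]

lemma sum_norm_mul_norm_le (A B : Finset G) :
    ∑ χ : AddChar G ℂ, ‖∑ a ∈ A, conj (χ a)‖ * ‖∑ b ∈ B, conj (χ b)‖ ≤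
      √(#A * Fintype.card G) * √(#B * Fintype.card G) := by
  simpa only [sum_norm_sq_sum_conj_apply] using Real.sum_mul_le_sqrt_mul_sqrt univ
    (fun χ : AddChar G ℂ ↦ ‖∑ a ∈ A, conj (χ a)‖) (fun χ ↦ ‖∑ b ∈ B, conj (χ b)‖)

end Parseval

end AddChar

theorem stmt13_general {G : Type*} [AddCommGroup G] [Fintype G] [Fintype (AddChar G ℂ)]
    (A B : Finset G) (α β ε ζ : ℝ)
    (hα : (A.card : ℝ) = α * Fintype.card G) (hβ : (B.card : ℝ) = β * Fintype.card G)
    (hζ : 0 < ζ)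
    (Λ : Finset (AddChar G ℂ))
    (hspan : ∀ χ ∈ Finset.univ.filter (fun χ : AddChar G ℂ =>
        ε * A.card ≤ ‖∑ a ∈ A, (starRingEnd ℂ) (χ a)‖),
      ∃ P N : Finset (AddChar G ℂ), P ⊆ Λ ∧ N ⊆ Λ ∧ Disjoint P N ∧
        χ * ∏ lam ∈ N, lam = ∏ lam ∈ P, lam)
    (g : G → ℂ)
    (hg : ∀ x, g x = (1 / (Fintype.card G : ℂ)) *
      ∑ χ ∈ Finset.univ.filter (fun χ : AddChar G ℂ =>
          ε * A.card ≤ ‖∑ a ∈ A, (starRingEnd ℂ) (χ a)‖),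
        ((∑ a ∈ A, (starRingEnd ℂ) (χ a)) * (∑ b ∈ B, (starRingEnd ℂ) (χ b))) * χ x) :
    ∀ b ∈ {z : G | ∀ lam ∈ Λ, ‖lam z - 1‖ ≤ ζ / Λ.card}, ∀ x : G,
      ‖g (x + b) - g x‖ ≤ Real.sqrt (α * β) * ζ * Fintype.card G := by
  intro b hb x
  set S := univ.filter fun χ : AddChar G ℂ ↦ ε * #A ≤ ‖∑ a ∈ A, conj (χ a)‖
  have hS : ∀ χ ∈ S, ‖χ b - 1‖ ≤ ζ := fun χ hχ ↦ by
    obtain ⟨P, N, hP, hN, hPN, h⟩ := hspan χ hχ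
    exact AddChar.norm_apply_sub_one_le_of_mem_bohr hζ.le hb hP hN hPN h
  have hAB : √(#A * Fintype.card G) * √(#B * Fintype.card G) = √(α * β) * Fintype.card G ^ 2 := by
    rw [← Real.sqrt_mul (by positivity), hα, hβ,
      show α * Fintype.card G * Fintype.card G * (β * Fintype.card G * Fintype.card G) =
        α * β * (Fintype.card G ^ 2) ^ 2 by ring,
      Real.sqrt_mul' _ (by positivity), Real.sqrt_sq (by positivity)]
  rw [hg, hg, ← mul_sub, norm_mul]
  calc ‖1 / (Fintype.card G : ℂ)‖ * ‖_ - _‖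
      ≤ 1 / Fintype.card G * (ζ * ∑ χ ∈ S, ‖(∑ a ∈ A, conj (χ a)) * ∑ b ∈ B, conj (χ b)‖) := by
        simp only [norm_div, norm_one, Complex.norm_natCast]
        gcongr
        exact AddChar.norm_sum_mul_apply_add_sub_le S _ hS x
    _ ≤ 1 / Fintype.card G * (ζ * (√(#A * Fintype.card G) * √(#B * Fintype.card G))) := by
        simp only [norm_mul]
        gcongr
        exact (sum_le_sum_of_subset_of_nonneg (subset_univ S) fun _ _ _ ↦ by positivity).trans
          (AddChar.sum_norm_mul_norm_le A B)
    _ = √(α * β) * ζ * Fintype.card G := by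
        rw [hAB]
        field_simp

theorem stmt13 {G : Type*} [AddCommGroup G] [Fintype G] [Fintype (AddChar G ℂ)]
    (A B : Finset G) (α β ε ζ : ℝ)
    (hα : (A.card : ℝ) = α * Fintype.card G) (hβ : (B.card : ℝ) = β * Fintype.card G)
    (hε : 0 < ε) (hζ : 0 < ζ)
    (Λ : Finset (AddChar G ℂ)) (hΛ : Λ.Nonempty)
    (hspan : ∀ χ ∈ Finset.univ.filter (fun χ : AddChar G ℂ =>
        ε * A.card ≤ ‖∑ a ∈ A, (starRingEnd ℂ) (χ a)‖),
      ∃ P N : Finset (AddChar G ℂ), P ⊆ Λ ∧ N ⊆ Λ ∧ Disjoint P N ∧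
        χ * ∏ lam ∈ N, lam = ∏ lam ∈ P, lam)
    (g : G → ℂ)
    (hg : ∀ x, g x = (1 / (Fintype.card G : ℂ)) *
      ∑ χ ∈ Finset.univ.filter (fun χ : AddChar G ℂ =>
          ε * A.card ≤ ‖∑ a ∈ A, (starRingEnd ℂ) (χ a)‖),
        ((∑ a ∈ A, (starRingEnd ℂ) (χ a)) * (∑ b ∈ B, (starRingEnd ℂ) (χ b))) * χ x) :
    ∀ b ∈ {z : G | ∀ lam ∈ Λ, ‖lam z - 1‖ ≤ ζ / Λ.card}, ∀ x : G,
      ‖g (x + b) - g x‖ ≤ Real.sqrt (α * β) * ζ * Fintype.card G :=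
  stmt13_general A B α β ε ζ hα hβ hζ Λ hspan g hg
end

section
/- For all sufficiently large primes p and any M ≤ p/16, the sum Σ_{a=1}^{M} C(p, a) Σ_{b=1}^{p} C(p, b) Σ_{c=1}^{p−a−b+1} C(p−a−b+1, c) is at most 4·3^p·C(p, M)·2^{−M}, and hence is less than 4·(3.75)^p. -/
/-!
For fixed `a ≥ 1`, bounding `∑_c C(n, c) ≤ 2 ^ n` and using `∑_b C(p, b) 2 ^ (p - b) = 3 ^ p`, the
sum over `b` and `c` is at most `2 · 3^p / 2^a + 2 · 2^p ≤ (8/3) · 3^p / 2^a`, the last step because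
`3 · 2^a · 2^p ≤ 3^p` when `16 a ≤ p`. For `a < M ≤ p/16` the ratio `C(p, a+1) / C(p, a) = (p-a)/(a+1)`
is at least `6`, so `C(p, a) / 2^a` grows at least threefold at each step and its sum over `1 ≤ a ≤ M`
is at most `3/2` times its last term. Finally `C(p, M) (1/8)^M ≤ (9/8)^p` is one term of the binomial
expansion of `(1 + 1/8)^p`, and `4^M < (10/9)^(16 M) ≤ (10/9)^p`, so `C(p, M) / 2^M < (5/4)^p`.
-/

open Finset

namespace Nat

theorem mul_choose_le_choose_succ {n k r : ℕ} (h : r * (k + 1) ≤ n - k) :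
    r * n.choose k ≤ n.choose (k + 1) := by
  refine Nat.le_of_mul_le_mul_right ?_ k.succ_pos
  calc r * n.choose k * (k + 1) = n.choose k * (r * (k + 1)) := by ring
    _ ≤ n.choose k * (n - k) := Nat.mul_le_mul_left _ h
    _ = n.choose (k + 1) * (k + 1) := (choose_succ_right_eq n k).symm

theorem choose_mul_pow_le_one_add_pow {x : ℝ} (hx : 0 ≤ x) (n k : ℕ) :
    (n.choose k : ℝ) * x ^ k ≤ (1 + x) ^ n := by
  rcases le_or_gt k n with hk | hk
  · rw [add_comm, add_pow]
    refine le_of_eq_of_le ?_ (single_le_sum (f := fun m => x ^ m * 1 ^ (n - m) * (n.choose m : ℝ))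
      (fun m _ => by positivity) (mem_range.2 (Nat.lt_succ_of_le hk)))
    ring
  · rw [choose_eq_zero_of_lt hk]
    simp only [cast_zero, zero_mul]
    positivity

theorem sum_Icc_one_choose_le_two_pow (n : ℕ) : ∑ c ∈ Icc 1 n, n.choose c ≤ 2 ^ n :=
  sum_range_choose n ▸ sum_le_sum_of_subset (fun c hc => by simp only [mem_Icc, mem_range] at *; omega)

theorem sum_range_choose_mul_two_pow (n : ℕ) :
    ∑ m ∈ range (n + 1), n.choose m * 2 ^ (n - m) = 3 ^ n := by
  rw [show 3 = 1 + 2 from rfl, add_pow]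
  exact sum_congr rfl fun m _ => by rw [one_pow, one_mul, cast_id, mul_comm]

end Nat

theorem pow_tsub_le_pow_div_pow_add_one {x : ℝ} (hx : 0 < x) (n k : ℕ) :
    x ^ (n - k) ≤ x ^ n / x ^ k + 1 := by
  rcases le_total k n with h | h
  · rw [pow_sub₀ x hx.ne' h, div_eq_mul_inv]
    linarith
  · rw [Nat.sub_eq_zero_of_le h, pow_zero]
    linarith [show 0 ≤ x ^ n / x ^ k by positivity]

theorem sub_one_mul_sum_Icc_le_of_le_mul {t : ℕ → ℝ} {r : ℝ} (hr : 0 ≤ r) (ht : 0 ≤ t 0)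
    {M : ℕ} (h : ∀ a < M, r * t a ≤ t (a + 1)) : (r - 1) * ∑ a ∈ Icc 1 M, t a ≤ r * t M := by
  induction M with
  | zero => simpa using mul_nonneg hr ht
  | succ n ih =>
    rw [sum_Icc_succ_top (by omega), mul_add]
    linarith [ih fun a ha => h a (by omega), h n n.lt_succ_self]

theorem three_mul_two_pow_mul_two_pow_le_three_pow {a p : ℕ} (ha : 1 ≤ a) (hap : 16 * a ≤ p) :
    3 * 2 ^ a * 2 ^ p ≤ 3 ^ p := by
  obtain ⟨k, rfl⟩ : ∃ k, p = 16 * a + k := ⟨p - 16 * a, by omega⟩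
  have h3 : 3 ≤ 4 ^ a := le_trans (by norm_num) (Nat.pow_le_pow_right (by norm_num) ha)
  calc 3 * 2 ^ a * 2 ^ (16 * a + k) ≤ 4 ^ a * 2 ^ a * 2 ^ (16 * a + k) := by gcongr
    _ = (2 ^ 19) ^ a * 2 ^ k := by
      rw [← mul_pow, pow_add, pow_mul, ← mul_assoc, ← mul_pow]
      norm_num
    _ ≤ (3 ^ 16) ^ a * 3 ^ k :=
      Nat.mul_le_mul (Nat.pow_le_pow_left (by norm_num) a) (Nat.pow_le_pow_left (by norm_num) k)
    _ = 3 ^ (16 * a + k) := by rw [pow_add, pow_mul]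

theorem sum_choose_mul_sum_choose_le {p a : ℕ} (ha : 1 ≤ a) (hap : 16 * a ≤ p) :
    ∑ b ∈ Icc 1 p, (p.choose b : ℝ) *
        ∑ c ∈ Icc 1 (p - a - b + 1), ((p - a - b + 1).choose c : ℝ)
      ≤ 8 / 3 * 3 ^ p / 2 ^ a := by
  -- `p - a - b` is truncated: for `b > p - a` the inner sum is `1`, not empty, whence the `+ 1`
  -- of `pow_tsub_le_pow_div_pow_add_one` and the term `2 * p.choose b`.
  have hterm : ∀ b, (p.choose b : ℝ) * ∑ c ∈ Icc 1 (p - a - b + 1), ((p - a - b + 1).choose c : ℝ)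
      ≤ (p.choose b : ℝ) * 2 ^ (p - b) * (2 / 2 ^ a) + 2 * p.choose b := by
    intro b
    have hinner : ∑ c ∈ Icc 1 (p - a - b + 1), ((p - a - b + 1).choose c : ℝ)
        ≤ 2 ^ (p - a - b + 1) := by exact_mod_cast Nat.sum_Icc_one_choose_le_two_pow _
    have hpow := pow_tsub_le_pow_div_pow_add_one two_pos (p - b) a
    rw [Nat.sub_right_comm] at hpow
    calc _ ≤ (p.choose b : ℝ) * 2 ^ (p - a - b + 1) := by gcongr
      _ ≤ (p.choose b : ℝ) * (2 * (2 ^ (p - b) / 2 ^ a + 1)) := by rw [pow_succ']; gcongr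
      _ = _ := by ring
  have hsum : ∑ b ∈ range (p + 1), ((p.choose b : ℝ) * 2 ^ (p - b) * (2 / 2 ^ a) + 2 * p.choose b)
      = 3 ^ p * (2 / 2 ^ a) + 2 * 2 ^ p := by
    have hthree : ∑ b ∈ range (p + 1), (p.choose b : ℝ) * 2 ^ (p - b) = 3 ^ p := by
      exact_mod_cast Nat.sum_range_choose_mul_two_pow p
    have htwo : ∑ b ∈ range (p + 1), (p.choose b : ℝ) = 2 ^ p := by
      exact_mod_cast Nat.sum_range_choose p
    rw [sum_add_distrib, ← sum_mul, ← mul_sum, hthree, htwo]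
  have hsmall : (3 : ℝ) * 2 ^ a * 2 ^ p ≤ 3 ^ p := by
    exact_mod_cast three_mul_two_pow_mul_two_pow_le_three_pow ha hap
  calc _ ≤ ∑ b ∈ range (p + 1), ((p.choose b : ℝ) * 2 ^ (p - b) * (2 / 2 ^ a) + 2 * p.choose b) :=
        (sum_le_sum fun b _ => hterm b).trans <| sum_le_sum_of_subset_of_nonneg
          (fun b hb => by simp only [mem_Icc, mem_range] at *; omega) fun _ _ _ => by positivity
    _ = 3 ^ p * (2 / 2 ^ a) + 2 * 2 ^ p := hsum
    _ ≤ 8 / 3 * 3 ^ p / 2 ^ a := by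
      rw [le_div_iff₀ (by positivity)]
      field_simp
      linarith

theorem sum_choose_mul_sum_choose_mul_sum_choose_le {p M : ℕ} (hMp : 16 * M ≤ p) :
    ∑ a ∈ Icc 1 M, (p.choose a : ℝ) *
        ∑ b ∈ Icc 1 p, (p.choose b : ℝ) *
          ∑ c ∈ Icc 1 (p - a - b + 1), ((p - a - b + 1).choose c : ℝ)
      ≤ 4 * 3 ^ p * (p.choose M : ℝ) / 2 ^ M := by
  set t : ℕ → ℝ := fun a => (p.choose a : ℝ) / 2 ^ a with ht
  have hgrowth : ∀ a < M, 3 * t a ≤ t (a + 1) := by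
    intro a ha
    have h6 : (6 * p.choose a : ℝ) ≤ p.choose (a + 1) := by
      exact_mod_cast Nat.mul_choose_le_choose_succ (by omega)
    calc 3 * t a = 6 * p.choose a / 2 ^ (a + 1) := by rw [ht, pow_succ]; ring
      _ ≤ p.choose (a + 1) / 2 ^ (a + 1) := by gcongr
  have hgeom := sub_one_mul_sum_Icc_le_of_le_mul (by norm_num) (by positivity) hgrowth
  calc _ ≤ ∑ a ∈ Icc 1 M, (p.choose a : ℝ) * (8 / 3 * 3 ^ p / 2 ^ a) := by
        refine sum_le_sum fun a ha => ?_
        rw [mem_Icc] at ha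
        gcongr
        exact sum_choose_mul_sum_choose_le ha.1 (by omega)
    _ = 4 / 3 * 3 ^ p * ((3 - 1) * ∑ a ∈ Icc 1 M, t a) := by
        rw [mul_sum, mul_sum]
        exact sum_congr rfl fun a _ => by ring
    _ ≤ 4 / 3 * 3 ^ p * (3 * t M) := by gcongr
    _ = 4 * 3 ^ p * (p.choose M : ℝ) / 2 ^ M := by ring

theorem choose_div_two_pow_lt {p M : ℕ} (hM : 1 ≤ M) (hMp : 16 * M ≤ p) :
    (p.choose M : ℝ) / 2 ^ M < (5 / 4) ^ p := by
  have hchoose : (p.choose M : ℝ) * (1 / 8) ^ M ≤ (9 / 8) ^ p := by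
    convert Nat.choose_mul_pow_le_one_add_pow (by norm_num : (0 : ℝ) ≤ 1 / 8) p M using 2
    norm_num
  have hfour : (4 : ℝ) ^ M < (10 / 9) ^ p :=
    calc (4 : ℝ) ^ M < ((10 / 9) ^ 16) ^ M := pow_lt_pow_left₀ (by norm_num) (by norm_num) (by omega)
      _ = (10 / 9) ^ (16 * M) := by rw [pow_mul]
      _ ≤ (10 / 9) ^ p := pow_le_pow_right₀ (by norm_num) hMp
  calc (p.choose M : ℝ) / 2 ^ M = (p.choose M : ℝ) * (1 / 8) ^ M * 4 ^ M := by
        rw [div_eq_mul_inv, mul_assoc, ← mul_pow, ← inv_pow]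
        norm_num
    _ ≤ (9 / 8) ^ p * 4 ^ M := by gcongr
    _ < (9 / 8) ^ p * (10 / 9) ^ p := by gcongr
    _ = (5 / 4) ^ p := by rw [← mul_pow]; norm_num

theorem stmt14 :
    ∃ p₀ : ℕ, ∀ p : ℕ, p.Prime → p₀ ≤ p → ∀ M : ℕ, M ≤ p / 16 →
      (∑ a ∈ Finset.Icc 1 M, (p.choose a : ℝ) *
          ∑ b ∈ Finset.Icc 1 p, (p.choose b : ℝ) *
            ∑ c ∈ Finset.Icc 1 (p - a - b + 1), ((p - a - b + 1).choose c : ℝ))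
        ≤ 4 * 3 ^ p * (p.choose M : ℝ) / 2 ^ M ∧
      (∑ a ∈ Finset.Icc 1 M, (p.choose a : ℝ) *
          ∑ b ∈ Finset.Icc 1 p, (p.choose b : ℝ) *
            ∑ c ∈ Finset.Icc 1 (p - a - b + 1), ((p - a - b + 1).choose c : ℝ))
        < 4 * (3.75 : ℝ) ^ p := by
  refine ⟨0, fun p _ _ M hM => ?_⟩
  have hMp : 16 * M ≤ p := by omega
  have hbound := sum_choose_mul_sum_choose_mul_sum_choose_le hMp
  refine ⟨hbound, ?_⟩
  rcases Nat.eq_zero_or_pos M with rfl | hM1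
  · simp only [Icc_eq_empty_of_lt one_pos, sum_empty]
    positivity
  calc _ ≤ 4 * 3 ^ p * ((p.choose M : ℝ) / 2 ^ M) := by rwa [← mul_div_assoc]
    _ < 4 * 3 ^ p * (5 / 4) ^ p := by gcongr; exact choose_div_two_pow_lt hM1 hMp
    _ = 4 * (3.75 : ℝ) ^ p := by rw [mul_assoc, ← mul_pow]; norm_num
end
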